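/- For every k ≥ 1 and every positive integer a, there exists an M-sequence (1, g_1, ..., g_k) with g_k = a and g_1 + g_2 + ... + g_{k-1} ≤ C_k · a^{(k-1)/k} for a constant C_k depending only on k. -/

import Mathlib

/-- The largest `a` such that `C(a,i) ≤ n` (for `n ≥ 1`, `i ≥ 1`):
the top term of the `i`-th Macaulay representation of `n`. -/
def macaulayTop (n i : ℕ) : ℕ :=
  Nat.findGreatest (fun a => Nat.choose a i ≤ n) (n + i)

/-- The Macaulay pseudo-power `n^{<i>}`: write the `i`-th Macaulay representation
`n = C(a_i,i) + C(a_{i-1},i-1) + ⋯ + C(a_j,j)` (computed greedily) and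
return `C(a_i+1,i+1) + C(a_{i-1}+1,i) + ⋯ + C(a_j+1,j+1)`; also `0^{<i>} = 0`. -/
def pseudoPow : ℕ → ℕ → ℕ
  | _, 0 => 0
  | n, (i+1) =>
    if n = 0 then 0
    else Nat.choose (macaulayTop n (i+1) + 1) (i+2) +
      pseudoPow (n - Nat.choose (macaulayTop n (i+1)) (i+1)) i

/-- `(g 0, g 1, …, g k)` is an M-sequence: `g 0 = 1` and
`g (i+1) ≤ (g i)^{<i>}` for all `1 ≤ i < k`. -/
def IsMSequence (g : ℕ → ℕ) (k : ℕ) : Prop :=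
  g 0 = 1 ∧ ∀ i, 1 ≤ i → i < k → g (i + 1) ≤ pseudoPow (g i) i

/-!
Take `g i = C(n + i, i)` for `i < k` and `g k = a`, where `n` is least with `a ≤ C(n + k, k)`.
Since `C(x, i)` is its own `i`-th Macaulay representation, its pseudo-power is `C(x + 1, i + 1)`,
so the binomial terms form an M-sequence which `a` is allowed to end. Minimality of `n` gives
`n ^ k ≤ k! * a`, hence `n = O(a ^ (1/k))`, and every `g i` with `i < k` is at most
`(n + k) ^ (k - 1) = O(a ^ ((k - 1)/k))`.
-/

open Finset Nat

theorem pseudoPow_zero_left (i : ℕ) : pseudoPow 0 i = 0 := by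
  cases i <;> simp [pseudoPow]

theorem self_le_choose_add (x : ℕ) {i : ℕ} (hi : i ≠ 0) : x ≤ x.choose i + i := by
  induction x generalizing i with
  | zero => omega
  | succ x ih =>
    obtain ⟨j, rfl⟩ : ∃ j, i = j + 1 := ⟨i - 1, by omega⟩
    rcases le_or_gt (x + 1) (j + 1) with h | h
    · omega
    · have h1 : 1 ≤ x.choose j := choose_pos (by omega)
      have h2 := ih (i := j + 1) (by omega)
      rw [choose_succ_succ']
      omega

theorem choose_lt_choose_succ {x i : ℕ} (hi : i ≤ x + 1) (hi0 : i ≠ 0) :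
    x.choose i < (x + 1).choose i := by
  obtain ⟨j, rfl⟩ : ∃ j, i = j + 1 := ⟨i - 1, by omega⟩
  have : 1 ≤ x.choose j := choose_pos (by omega)
  rw [choose_succ_succ']
  omega

theorem macaulayTop_choose {x i : ℕ} (hi : i ≠ 0) (hx : i ≤ x) :
    macaulayTop (x.choose i) i = x := by
  rw [macaulayTop, findGreatest_eq_iff]
  refine ⟨by have := self_le_choose_add x hi; omega, fun _ => le_rfl, fun y hy _ hle => ?_⟩
  have := choose_lt_choose_succ (x := x) (by omega) hi
  have := choose_le_choose i (show x + 1 ≤ y by omega)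
  omega

theorem pseudoPow_choose {i : ℕ} (hi : i ≠ 0) (x : ℕ) :
    pseudoPow (x.choose i) i = (x + 1).choose (i + 1) := by
  obtain ⟨j, rfl⟩ : ∃ j, i = j + 1 := ⟨i - 1, by omega⟩
  by_cases hx : j + 1 ≤ x
  · rw [pseudoPow, if_neg (choose_pos hx).ne', macaulayTop_choose hi hx, Nat.sub_self,
      pseudoPow_zero_left, add_zero]
  · rw [choose_eq_zero_of_lt (by omega), choose_eq_zero_of_lt (by omega), pseudoPow_zero_left]

theorem isMSequence_update_choose {n k a : ℕ} (hk : k ≠ 0) (ha : a ≤ (n + k).choose k) :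
    IsMSequence (Function.update (fun i => (n + i).choose i) k a) k := by
  refine ⟨by simp [Function.update_of_ne (Ne.symm hk)], fun i hi hik => ?_⟩
  rw [Function.update_of_ne hik.ne, pseudoPow_choose (by omega)]
  rcases (succ_le_of_lt hik).eq_or_lt with rfl | hlt
  · simpa [add_assoc] using ha
  · rw [Function.update_of_ne hlt.ne, add_assoc]

theorem exists_le_choose_add_and_pow_le {k : ℕ} (hk : k ≠ 0) (a : ℕ) :
    ∃ n, a ≤ (n + k).choose k ∧ n ^ k ≤ k ! * a := by
  have hex : ∃ n, a ≤ (n + k).choose k := ⟨a, by simpa using self_le_choose_add (a + k) hk⟩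
  refine ⟨Nat.find hex, Nat.find_spec hex, ?_⟩
  rcases h : Nat.find hex with _ | m
  · simp [zero_pow hk]
  · have hlt : (m + k).choose k < a := not_le.1 (Nat.find_min hex (by omega))
    calc (m + 1) ^ k ≤ (m + 1).ascFactorial k := pow_succ_le_ascFactorial _ _
      _ = k ! * (m + k).choose k := ascFactorial_eq_factorial_mul_choose m k
      _ ≤ k ! * a := by gcongr

theorem sum_Ico_choose_add_le (n k : ℕ) :
    ∑ i ∈ Ico 1 k, (n + i).choose i ≤ (k - 1) * (n + k) ^ (k - 1) := by
  have hterm : ∀ i ∈ Ico 1 k, (n + i).choose i ≤ (n + k) ^ (k - 1) := fun i hi => by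
    have hi := mem_Ico.1 hi
    calc (n + i).choose i ≤ (n + i) ^ i := choose_le_pow _ _
      _ ≤ (n + k) ^ i := by gcongr; omega
      _ ≤ (n + k) ^ (k - 1) := pow_le_pow_right₀ (by omega) (by omega)
  simpa using sum_le_card_nsmul _ _ _ hterm

theorem natCast_add_le_two_mul_rpow_inv {n k a : ℕ} (hk : k ≠ 0) (ha : 1 ≤ a)
    (h : n ^ k ≤ k ! * a) : (n + k : ℝ) ≤ 2 * k * (a : ℝ) ^ (k⁻¹ : ℝ) := by
  set t := (a : ℝ) ^ (k⁻¹ : ℝ)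
  have ht : 1 ≤ t := Real.one_le_rpow (by exact_mod_cast ha) (by positivity)
  have hn : (n : ℝ) ≤ k * t := by
    refine le_of_pow_le_pow_left₀ hk (by positivity) ?_
    rw [mul_pow, Real.rpow_inv_natCast_pow (by positivity) hk]
    exact_mod_cast h.trans (Nat.mul_le_mul_right _ k.factorial_le_pow)
  nlinarith [(k.cast_nonneg : (0 : ℝ) ≤ k)]

theorem rpow_sub_one_div_eq_pow {x : ℝ} (hx : 0 ≤ x) {k : ℕ} (hk : 1 ≤ k) :
    x ^ ((k - 1 : ℝ) / k) = (x ^ (k⁻¹ : ℝ)) ^ (k - 1) := by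
  rw [← Real.rpow_natCast, ← Real.rpow_mul hx, Nat.cast_sub hk, Nat.cast_one, div_eq_inv_mul]

/-- for every `k ≥ 1` there is a constant `C` depending only on `k`
such that for every positive integer `a` there exists an M-sequence
`(1, g 1, …, g k)` with `g k = a` and `g 1 + ⋯ + g (k-1) ≤ C * a^((k-1)/k)`. -/
theorem msequence_small_tail_exists (k : ℕ) (hk : 1 ≤ k) :
    ∃ C : ℝ, ∀ a : ℕ, 1 ≤ a → ∃ g : ℕ → ℕ, IsMSequence g k ∧ g k = a ∧
      (∑ i ∈ Finset.Ico 1 k, (g i : ℝ)) ≤ C * (a : ℝ) ^ ((k - 1 : ℝ) / k) := by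
  refine ⟨k * (2 * k) ^ (k - 1), fun a ha => ?_⟩
  obtain ⟨n, hna, hn⟩ := exists_le_choose_add_and_pow_le (k := k) (by omega) a
  refine ⟨_, isMSequence_update_choose (by omega) hna, Function.update_self .., ?_⟩
  have hnk := natCast_add_le_two_mul_rpow_inv (by omega) ha hn
  calc ∑ i ∈ Ico 1 k, (Function.update (fun i => (n + i).choose i) k a i : ℝ)
      = ((∑ i ∈ Ico 1 k, (n + i).choose i : ℕ) : ℝ) := by
        push_cast
        exact sum_congr rfl fun i hi => by rw [Function.update_of_ne (mem_Ico.1 hi).2.ne]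
    _ ≤ (k - 1 : ℕ) * (n + k : ℝ) ^ (k - 1) := by exact_mod_cast sum_Ico_choose_add_le n k
    _ ≤ k * (2 * k * (a : ℝ) ^ (k⁻¹ : ℝ)) ^ (k - 1) := by
        gcongr
        exact_mod_cast Nat.sub_le k 1
    _ = k * (2 * k) ^ (k - 1) * (a : ℝ) ^ ((k - 1 : ℝ) / k) := by
        rw [rpow_sub_one_div_eq_pow a.cast_nonneg hk, mul_pow, mul_assoc]
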